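/- Let (X, α) be a finite productive labelled transition system over a finite nonempty alphabet A, let M be a nonempty complete metric space, and let σ be a contraction operator interpretation of A on M. Then for every state x ∈ X, the regular subfractal ⟦x⟧ := σ_ω '' str(x) = { σ_ω(s) | s ∈ str(x) } is a nonempty compact subset of M. -/

import Mathlib

open Filter Topology
open scoped NNReal

/-- `IsTrace α x w` : the word `w` labels a path starting at `x` in the LTS `(X, α)`. -/
inductive IsTrace {X A : Type} (α : X → Set (A × X)) : X → List A → Prop
  | nil (x : X) : IsTrace α x []
  | cons {x y : X} {a : A} {w : List A} :
      (a, y) ∈ α x → IsTrace α y w → IsTrace α x (a :: w)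

/-- The trace set of a state `x`. -/
def tr {X A : Type} (α : X → Set (A × X)) (x : X) : Set (List A) :=
  {w | IsTrace α x w}

/-- The set of streams emitted by a state `x`. -/
def str {X A : Type} (α : X → Set (A × X)) (x : X) : Set (ℕ → A) :=
  {s | ∀ n : ℕ, (List.ofFn fun i : Fin n => s i.val) ∈ tr α x}

/-- `seqApp σ s p n = (σ_{s 0} ∘ σ_{s 1} ∘ ⋯ ∘ σ_{s n}) p`. -/
def seqApp {A M : Type} (σ : A → M → M) (s : ℕ → A) (p : M) (n : ℕ) : M :=
  (List.ofFn fun i : Fin (n + 1) => s i.val).foldr (fun a m => σ a m) p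

/-!
Give the alphabet the discrete topology, so that the stream space `ℕ → A` is compact. The set
`str x` of emitted streams is closed, being cut out by conditions on finite prefixes, and it is
nonempty because productivity lets us follow transitions forever. Finally `σω` is continuous:
all maps `σ a` preserve a common ball around a base point, so two streams sharing a prefix of
length `n` have their approximants confined to the image of that ball under one composite of
`n` contractions, a set of diameter `O(Cⁿ)`. Hence `σω '' str x` is a continuous image of a
nonempty compact set.
-/

open Set Metric PiNat

section Streams

variable {X A : Type} (α : X → Set (A × X))

theorem mem_str_of_transitions (t : ℕ → X) (a : ℕ → A)
    (h : ∀ n, (a n, t (n + 1)) ∈ α (t n)) : a ∈ str α (t 0) := by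
  intro n
  induction n generalizing t a with
  | zero => exact IsTrace.nil _
  | succ n ih =>
    rw [List.ofFn_succ]
    exact IsTrace.cons (h 0) (ih (fun n => t (n + 1)) (fun n => a (n + 1)) fun n => h (n + 1))

theorem str_nonempty (hprod : ∀ x, (α x).Nonempty) (x : X) : (str α x).Nonempty := by
  choose next hnext using hprod
  let t : ℕ → X := fun n => (fun y => (next y).2)^[n] x
  refine ⟨fun n => (next (t n)).1, mem_str_of_transitions α t _ fun n => ?_⟩
  simpa only [t, Function.iterate_succ_apply'] using hnext (t n)

theorem isClosed_str [TopologicalSpace A] [DiscreteTopology A] (x : X) :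
    IsClosed (str α x) := by
  have hprefix : str α x = ⋂ n : ℕ,
      (fun s : ℕ → A => fun i : Fin n => s i) ⁻¹' {w | List.ofFn w ∈ tr α x} := by
    ext s
    simp [str]
  rw [hprefix]
  exact isClosed_iInter fun n =>
    (isClosed_discrete _).preimage (continuous_pi fun i => continuous_apply _)

end Streams

section Contraction

variable {A M : Type} (σ : A → M → M)

theorem seqApp_zero (s : ℕ → A) (q : M) : seqApp σ s q 0 = σ (s 0) q := by
  simp [seqApp, List.ofFn_succ]

theorem seqApp_succ (s : ℕ → A) (q : M) (n : ℕ) :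
    seqApp σ s q (n + 1) = σ (s 0) (seqApp σ (fun i => s (i + 1)) q n) := by
  simp [seqApp, List.ofFn_succ]

theorem seqApp_add (s : ℕ → A) (q : M) (n k : ℕ) :
    seqApp σ s q (n + 1 + k) = seqApp σ s (seqApp σ (fun i => s (n + 1 + i)) q k) n := by
  simp only [seqApp]
  rw [List.ofFn_add (n := n + 1) (m := k + 1), List.foldr_append]
  rfl

theorem seqApp_eq_of_mem_cylinder {s v : ℕ → A} {n : ℕ} (hv : v ∈ cylinder s (n + 1))
    (q : M) : seqApp σ v q n = seqApp σ s q n := by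
  simp only [seqApp]
  congr 2
  funext i
  exact hv i i.isLt

theorem seqApp_mem_of_mapsTo {S : Set M} (hS : ∀ a, MapsTo (σ a) S S) (s : ℕ → A) {q : M}
    (hq : q ∈ S) (n : ℕ) : seqApp σ s q n ∈ S := by
  induction n generalizing s with
  | zero => exact seqApp_zero σ s q ▸ hS _ hq
  | succ n ih => exact seqApp_succ σ s q n ▸ hS _ (ih _)

variable {σ} [MetricSpace M] {C : ℝ≥0}

theorem lipschitzWith_seqApp (hσ : ∀ a, LipschitzWith C (σ a)) (s : ℕ → A) (n : ℕ) :
    LipschitzWith (C ^ (n + 1)) (fun q => seqApp σ s q n) := by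
  induction n generalizing s with
  | zero => simpa only [seqApp_zero, zero_add, pow_one] using hσ (s 0)
  | succ n ih =>
    simp_rw [seqApp_succ, pow_succ' C (n + 1)]
    exact (hσ (s 0)).comp (ih _)

theorem mapsTo_closedBall_of_lipschitzWith {f : M → M} (hf : LipschitzWith C f) (hC : C < 1)
    {p : M} {K : ℝ} (hK : dist (f p) p ≤ K) :
    MapsTo f (closedBall p (K / (1 - C))) (closedBall p (K / (1 - C))) := by
  intro q hq
  have h1C : (0 : ℝ) < 1 - C := sub_pos.2 (by exact_mod_cast hC)
  -- `R = K / (1 - C)` is the fixed point of `R ↦ C * R + K`.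
  have hfix : (C : ℝ) * (K / (1 - C)) + K = K / (1 - C) := by
    field_simp
    ring
  rw [mem_closedBall] at hq ⊢
  calc dist (f q) p ≤ dist (f q) (f p) + dist (f p) p := dist_triangle _ _ _
    _ ≤ C * dist q p + K := add_le_add (hf.dist_le_mul q p) hK
    _ ≤ C * (K / (1 - C)) + K := by gcongr
    _ = K / (1 - C) := hfix

theorem exists_isBounded_mapsTo [Finite A] (hσ : ∀ a, LipschitzWith C (σ a)) (hC : C < 1)
    (p : M) : ∃ S : Set M, Bornology.IsBounded S ∧ p ∈ S ∧ ∀ a, MapsTo (σ a) S S := by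
  obtain ⟨K, hK⟩ := Finite.exists_le fun a => nndist (σ a p) p
  refine ⟨closedBall p (K / (1 - C)), isBounded_closedBall, mem_closedBall_self ?_,
    fun a => mapsTo_closedBall_of_lipschitzWith (hσ a) hC (hK a)⟩
  exact div_nonneg K.coe_nonneg (sub_nonneg.2 (by exact_mod_cast hC.le))

variable (hσ : ∀ a, LipschitzWith C (σ a)) {S : Set M} (hSb : Bornology.IsBounded S)
  (hS : ∀ a, MapsTo (σ a) S S) {p : M} (hp : p ∈ S)
include hσ hSb hS hp

theorem dist_seqApp_le_of_mem_cylinder {s v : ℕ → A} {n : ℕ} (hv : v ∈ cylinder s (n + 1))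
    (k : ℕ) :
    dist (seqApp σ v p (n + 1 + k)) (seqApp σ s p (n + 1 + k)) ≤ C ^ (n + 1) * diam S := by
  rw [seqApp_add, seqApp_add, seqApp_eq_of_mem_cylinder σ hv]
  calc _ ≤ C ^ (n + 1) * dist (seqApp σ (fun i => v (n + 1 + i)) p k)
        (seqApp σ (fun i => s (n + 1 + i)) p k) := by
        exact_mod_cast (lipschitzWith_seqApp hσ s n).dist_le_mul _ _
    _ ≤ C ^ (n + 1) * diam S := by
        gcongr
        exact dist_le_diam_of_mem hSb (seqApp_mem_of_mapsTo σ hS _ hp k)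
          (seqApp_mem_of_mapsTo σ hS _ hp k)

variable {σω : (ℕ → A) → M}
  (hσω : ∀ s, Tendsto (fun n => seqApp σ s p n) atTop (𝓝 (σω s)))
include hσω

theorem dist_le_of_mem_cylinder {s v : ℕ → A} {n : ℕ} (hv : v ∈ cylinder s (n + 1)) :
    dist (σω v) (σω s) ≤ C ^ (n + 1) * diam S := by
  refine le_of_tendsto ((hσω v).dist (hσω s)) ?_
  filter_upwards [eventually_ge_atTop (n + 1)] with m hm
  obtain ⟨k, rfl⟩ := Nat.exists_eq_add_of_le hm
  exact dist_seqApp_le_of_mem_cylinder hσ hSb hS hp hv k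

theorem continuous_of_tendsto_seqApp [TopologicalSpace A] [DiscreteTopology A] (hC : C < 1) :
    Continuous σω := by
  refine continuous_iff_continuousAt.2 fun s => Metric.tendsto_nhds.2 fun ε hε => ?_
  have hsmall : Tendsto (fun n => (C : ℝ) ^ (n + 1) * diam S) atTop (𝓝 0) := by
    simpa using ((tendsto_pow_atTop_nhds_zero_of_lt_one C.coe_nonneg hC).comp
      (tendsto_add_atTop_nat 1)).mul_const (diam S)
  obtain ⟨n, hn⟩ := (hsmall.eventually (gt_mem_nhds hε)).exists
  filter_upwards [(isOpen_cylinder _ s (n + 1)).mem_nhds (self_mem_cylinder s (n + 1))] with v hv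
  exact (dist_le_of_mem_cylinder hσ hSb hS hp hσω hv).trans_lt hn

end Contraction

theorem regular_subfractal_nonempty_isCompact_general {X A M : Type}
    [Fintype A]
    [MetricSpace M]
    (α : X → Set (A × X)) (hprod : ∀ x, α x ≠ ∅)
    (σ : A → M → M) (c : A → ℝ≥0) (hc : ∀ a, c a < 1)
    (hσ : ∀ a, LipschitzWith (c a) (σ a))
    (σω : (ℕ → A) → M)
    (hσω : ∀ (s : ℕ → A) (p : M), Tendsto (fun n => seqApp σ s p n) atTop (𝓝 (σω s)))
    (x : X) :
    (σω '' str α x).Nonempty ∧ IsCompact (σω '' str α x) := by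
  let _ : TopologicalSpace A := ⊥
  have _ : DiscreteTopology A := ⟨rfl⟩
  obtain ⟨s₀, hs₀⟩ := str_nonempty α (fun y => nonempty_iff_ne_empty.2 (hprod y)) x
  have hC : Finset.univ.sup c < 1 :=
    (Finset.sup_lt_iff zero_lt_one).2 fun a _ => hc a
  have hσC : ∀ a, LipschitzWith (Finset.univ.sup c) (σ a) :=
    fun a => (hσ a).weaken (Finset.le_sup (Finset.mem_univ a))
  obtain ⟨S, hSb, hp, hS⟩ := exists_isBounded_mapsTo hσC hC (σω s₀)
  have hcont : Continuous σω :=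
    continuous_of_tendsto_seqApp hσC hSb hS hp (fun s => hσω s _) hC
  exact ⟨⟨σω s₀, mem_image_of_mem σω hs₀⟩, (isClosed_str α x).isCompact.image hcont⟩

/-- For a finite productive LTS and a contraction operator interpretation `σ`
on a nonempty complete metric space, the regular subfractal `σω '' str x` is a
nonempty compact subset of `M`. -/
theorem regular_subfractal_nonempty_isCompact {X A M : Type} [Finite X]
    [Fintype A] [Nonempty A]
    [MetricSpace M] [CompleteSpace M] [Nonempty M]
    (α : X → Set (A × X)) (hfin : ∀ x, (α x).Finite) (hprod : ∀ x, α x ≠ ∅)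
    (σ : A → M → M) (c : A → ℝ≥0) (hc : ∀ a, c a < 1)
    (hσ : ∀ a, LipschitzWith (c a) (σ a))
    (σω : (ℕ → A) → M)
    (hσω : ∀ (s : ℕ → A) (p : M), Tendsto (fun n => seqApp σ s p n) atTop (𝓝 (σω s)))
    (x : X) :
    (σω '' str α x).Nonempty ∧ IsCompact (σω '' str α x) :=
  regular_subfractal_nonempty_isCompact_general α hprod σ c hc hσ σω hσω x
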